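/- arXiv:cond-mat/9609254 — 2 statements merged into one kernel-verified Lean document; each statement's English description precedes it below -/
import Mathlib

section
/- In a unit-hereditary inverse semigroup with zero, two nonzero elements x and y have a common nonzero lower bound if and only if x·y⁻¹ is a nonzero idempotent, and in that case x·(y⁻¹·y) is the greatest common lower bound of x and y. -/
/-- An inverse semigroup: a semigroup in which every element `a` has a unique
inverse `a⁻¹` satisfying `a * a⁻¹ * a = a` and `a⁻¹ * a * a⁻¹ = a⁻¹`. -/
class InvSemigroup (S : Type*) extends Semigroup S, Inv S where
  mul_inv_mul : ∀ a : S, a * a⁻¹ * a = a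
  inv_mul_inv : ∀ a : S, a⁻¹ * a * a⁻¹ = a⁻¹
  inv_unique : ∀ a x : S, a * x * a = a → x * a * x = x → x = a⁻¹

/-- The natural order on an inverse semigroup. -/
def nle {S : Type*} [InvSemigroup S] (x y : S) : Prop := x * x⁻¹ = x * y⁻¹

/-- An inverse semigroup with a zero element. -/
class InvSemigroupWithZero (S : Type*) extends InvSemigroup S, Zero S where
  zero_mul : ∀ a : S, 0 * a = 0
  mul_zero : ∀ a : S, a * 0 = 0

/-- Minimal among nonzero elements w.r.t. the natural order. -/
def MinNZ {S : Type*} [InvSemigroupWithZero S] (m : S) : Prop :=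
  m ≠ 0 ∧ ∀ z : S, z ≠ 0 → nle z m → z = m

section AuxInvSemigroup
variable {S : Type*} [InvSemigroup S]

lemma mim (a : S) : a * a⁻¹ * a = a := InvSemigroup.mul_inv_mul a
lemma imi (a : S) : a⁻¹ * a * a⁻¹ = a⁻¹ := InvSemigroup.inv_mul_inv a
lemma mim' (a x : S) : a * (a⁻¹ * (a * x)) = a * x := by
  rw [← mul_assoc, ← mul_assoc, mim]
lemma imi' (a x : S) : a⁻¹ * (a * (a⁻¹ * x)) = a⁻¹ * x := by
  rw [← mul_assoc, ← mul_assoc, imi]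
lemma bib (b : S) : b * (b⁻¹ * b) = b := by rw [← mul_assoc, mim]
lemma aia (a : S) : a⁻¹ * (a * a⁻¹) = a⁻¹ := by rw [← mul_assoc, imi]

lemma my_inv_inv (a : S) : a⁻¹⁻¹ = a :=
  (InvSemigroup.inv_unique a⁻¹ a (imi a) (mim a)).symm

lemma idem_inv {e : S} (he : e * e = e) : e⁻¹ = e :=
  (InvSemigroup.inv_unique e e (by rw [he, he]) (by rw [he, he])).symm

lemma idemL {e : S} (he : e * e = e) (x : S) : e * (e * x) = e * x := by
  rw [← mul_assoc, he]

lemma inv_idemL (a : S) : (a * a⁻¹) * (a * a⁻¹) = a * a⁻¹ := by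
  rw [← mul_assoc, mim]

lemma inv_idemR (a : S) : (a⁻¹ * a) * (a⁻¹ * a) = a⁻¹ * a := by
  rw [← mul_assoc, imi]

lemma idem_mul {e f : S} (he : e * e = e) (hf : f * f = f) :
    (e * f) * (e * f) = e * f := by
  have h2 : (e * f)⁻¹ * (e * f) * (e * f)⁻¹ = (e * f)⁻¹ := imi (e * f)
  have h2e : (e * f)⁻¹ * (e * f) * (e * f)⁻¹ * e = (e * f)⁻¹ * e := by rw [h2]
  simp only [mul_assoc] at h2e
  have key : f * (e * f)⁻¹ * e = (e * f)⁻¹ := by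
    apply InvSemigroup.inv_unique
    · have h1 : (e * f) * (e * f)⁻¹ * (e * f) = e * f := mim (e * f)
      simp only [mul_assoc] at h1 ⊢
      rw [idemL hf, idemL he]; exact h1
    · simp only [mul_assoc]
      rw [idemL he, idemL hf, h2e]
  have haa : (e * f)⁻¹ * (e * f)⁻¹ = (e * f)⁻¹ := by
    rw [← key]
    simp only [mul_assoc]
    rw [h2e]
  have : e * f = (e * f)⁻¹ := by
    rw [← idem_inv haa, my_inv_inv]
  rw [this]; exact haa

lemma idem_comm {e f : S} (he : e * e = e) (hf : f * f = f) :
    e * f = f * e := by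
  have hef := idem_mul he hf
  have hfe := idem_mul hf he
  have : f * e = (e * f)⁻¹ := by
    apply InvSemigroup.inv_unique
    · simp only [mul_assoc] at hef ⊢
      rw [idemL hf, idemL he]; exact hef
    · simp only [mul_assoc] at hfe ⊢
      rw [idemL he, idemL hf]; exact hfe
  rw [this, idem_inv hef]

lemma idem_commL {e f : S} (he : e * e = e) (hf : f * f = f) (x : S) :
    e * (f * x) = f * (e * x) := by
  rw [← mul_assoc, idem_comm he hf, mul_assoc]

lemma swap_inv (a b x : S) :
    b * (b⁻¹ * (a⁻¹ * (a * x))) = a⁻¹ * (a * (b * (b⁻¹ * x))) := by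
  have h := idem_commL (inv_idemL b) (inv_idemR a) x
  simp only [mul_assoc] at h
  exact h

lemma my_mul_inv_rev (a b : S) : (a * b)⁻¹ = b⁻¹ * a⁻¹ := by
  symm
  apply InvSemigroup.inv_unique
  · simp only [mul_assoc]
    rw [swap_inv a b b, bib, mim']
  · simp only [mul_assoc]
    rw [← swap_inv a b a⁻¹, imi', aia]

lemma nle_flip {z x : S} (h : nle z x) : z * z⁻¹ = x * z⁻¹ := by
  have h' := congrArg Inv.inv (h : z * z⁻¹ = z * x⁻¹)
  simp only [my_mul_inv_rev, my_inv_inv] at h'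
  exact h'

lemma nle_eq {z x : S} (h : nle z x) : z = x * (z⁻¹ * z) := by
  have h' := nle_flip h
  calc z = z * (z⁻¹ * z) := (bib z).symm
    _ = z * z⁻¹ * z := by rw [mul_assoc]
    _ = x * z⁻¹ * z := by rw [h']
    _ = x * (z⁻¹ * z) := by rw [mul_assoc]

lemma nle_absorb {z x : S} (h : nle z x) : z * (x⁻¹ * x) = z := by
  have hz := nle_eq h
  conv_lhs => rw [hz]
  rw [mul_assoc, idem_comm (inv_idemR z) (inv_idemR x), ← mul_assoc, bib, ← hz]

end AuxInvSemigroup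

section AuxZero
variable {S : Type*} [InvSemigroupWithZero S]

lemma my_zero_inv : (0 : S)⁻¹ = 0 :=
  (InvSemigroup.inv_unique 0 0
    (by rw [InvSemigroupWithZero.zero_mul, InvSemigroupWithZero.zero_mul])
    (by rw [InvSemigroupWithZero.zero_mul, InvSemigroupWithZero.zero_mul])).symm

lemma mul_inv_ne_zero {z : S} (hz : z ≠ 0) : z * z⁻¹ ≠ 0 := by
  intro h0
  apply hz
  rw [← mim z, h0, InvSemigroupWithZero.zero_mul]

end AuxZero

/-- In a unit-hereditary inverse semigroup with zero, nonzero `x, y` have a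
common nonzero lower bound iff `x * y⁻¹` is a nonzero idempotent, and in that
case `x * (y⁻¹ * y)` is the greatest common lower bound. -/
theorem stmt10 {S : Type*} [InvSemigroupWithZero S]
    (hUH : ∀ e c : S, e ≠ 0 → e * e = e → nle e c → c * c = c)
    (x y : S) (hx : x ≠ 0) (hy : y ≠ 0) :
    ((∃ z : S, z ≠ 0 ∧ nle z x ∧ nle z y) ↔
      (x * y⁻¹ ≠ 0 ∧ (x * y⁻¹) * (x * y⁻¹) = x * y⁻¹)) ∧
    ((∃ z : S, z ≠ 0 ∧ nle z x ∧ nle z y) →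
      x * (y⁻¹ * y) ≠ 0 ∧ nle (x * (y⁻¹ * y)) x ∧ nle (x * (y⁻¹ * y)) y ∧
        ∀ z : S, z ≠ 0 → nle z x → nle z y → nle z (x * (y⁻¹ * y))) := by
  have hyx_inv : y * x⁻¹ = (x * y⁻¹)⁻¹ := by rw [my_mul_inv_rev, my_inv_inv]
  have hwinv : (x * (y⁻¹ * y))⁻¹ = (y⁻¹ * y) * x⁻¹ := by
    rw [my_mul_inv_rev, idem_inv (inv_idemR y)]
  have hwy' : (x * (y⁻¹ * y)) * y⁻¹ = x * y⁻¹ := by rw [mul_assoc, imi]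
  -- forward direction
  have fwd : (∃ z : S, z ≠ 0 ∧ nle z x ∧ nle z y) →
      x * y⁻¹ ≠ 0 ∧ (x * y⁻¹) * (x * y⁻¹) = x * y⁻¹ := by
    rintro ⟨z, hz0, hzx, hzy⟩
    have hzx' : z * z⁻¹ = z * x⁻¹ := hzx
    have hzy' : z * z⁻¹ = z * y⁻¹ := hzy
    have hzz : z * z⁻¹ ≠ 0 := mul_inv_ne_zero hz0
    have hk : (z * z⁻¹) * (y * x⁻¹) = z * z⁻¹ := by
      rw [hzy']
      simp only [mul_assoc]
      rw [← mul_assoc y⁻¹ y x⁻¹, ← mul_assoc z (y⁻¹ * y) x⁻¹, nle_absorb hzy,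
        ← hzx']
      exact hzy'
    have hle : nle (z * z⁻¹) (x * y⁻¹) := by
      show (z * z⁻¹) * (z * z⁻¹)⁻¹ = (z * z⁻¹) * (x * y⁻¹)⁻¹
      rw [idem_inv (inv_idemL z), inv_idemL, ← hyx_inv]
      exact hk.symm
    refine ⟨?_, hUH (z * z⁻¹) (x * y⁻¹) hzz (inv_idemL z) hle⟩
    intro h0
    apply hzz
    rw [← hk, hyx_inv, h0, my_zero_inv, InvSemigroupWithZero.mul_zero]
  -- backward facts, from idempotency
  have hwx : nle (x * (y⁻¹ * y)) x := by
    show (x * (y⁻¹ * y)) * (x * (y⁻¹ * y))⁻¹ = (x * (y⁻¹ * y)) * x⁻¹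
    rw [hwinv]
    simp only [mul_assoc]
    rw [imi']
  have bwd : (x * y⁻¹ ≠ 0 ∧ (x * y⁻¹) * (x * y⁻¹) = x * y⁻¹) →
      (x * (y⁻¹ * y) ≠ 0 ∧ nle (x * (y⁻¹ * y)) x ∧ nle (x * (y⁻¹ * y)) y ∧
        ∀ z : S, z ≠ 0 → nle z x → nle z y → nle z (x * (y⁻¹ * y))) := by
    rintro ⟨h1, h2⟩
    have hyx : y * x⁻¹ = x * y⁻¹ := by rw [hyx_inv, idem_inv h2]
    have hwne : x * (y⁻¹ * y) ≠ 0 := by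
      intro h0
      apply h1
      rw [← hwy', h0, InvSemigroupWithZero.zero_mul]
    have hwy : nle (x * (y⁻¹ * y)) y := by
      show (x * (y⁻¹ * y)) * (x * (y⁻¹ * y))⁻¹ = (x * (y⁻¹ * y)) * y⁻¹
      rw [hwinv, hwy']
      simp only [mul_assoc]
      rw [imi' y, hyx, ← mul_assoc]
      exact h2
    refine ⟨hwne, hwx, hwy, ?_⟩
    intro z hz0 hzx hzy
    have hzx' : z * z⁻¹ = z * x⁻¹ := hzx
    show z * z⁻¹ = z * (x * (y⁻¹ * y))⁻¹
    rw [hwinv, ← mul_assoc, nle_absorb hzy]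
    exact hzx'
  exact ⟨⟨fwd, fun h => ⟨x * (y⁻¹ * y), (bwd h).1, (bwd h).2.1, (bwd h).2.2.1⟩⟩,
    fun hex => bwd (fwd hex)⟩
end

section
/- Let Γ be a countable inverse semigroup with zero. Then every nonzero element x of Γ lies above some minimal element of the quotient poset of decreasing sequences; i.e., there exists a decreasing sequence (xₙ) with x₁ ≤ x whose equivalence class is minimal among classes of decreasing sequences of nonzero elements. -/
namespace InvSemigroup
variable {S : Type*} [InvSemigroup S]

lemma inv_inv' (a : S) : (a⁻¹)⁻¹ = a :=
  (inv_unique a⁻¹ a (inv_mul_inv a) (mul_inv_mul a)).symm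

lemma idem_inv {e : S} (he : e * e = e) : e⁻¹ = e :=
  (inv_unique e e (by rw [he, he]) (by rw [he, he])).symm

lemma mul_inv_idem (a : S) : (a * a⁻¹) * (a * a⁻¹) = a * a⁻¹ := by
  rw [← mul_assoc, mul_assoc a a⁻¹ a, ← mul_assoc, mul_inv_mul]

lemma inv_mul_idem (a : S) : (a⁻¹ * a) * (a⁻¹ * a) = a⁻¹ * a := by
  rw [← mul_assoc, mul_assoc a⁻¹ a a⁻¹, ← mul_assoc, inv_mul_inv]

lemma idem_mul_idem {e f : S} (he : e * e = e) (hf : f * f = f) :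
    (e * f) * (e * f) = e * f := by
  set x := (e * f)⁻¹ with hx
  have hA : f * x * e = (e * f)⁻¹ := by
    apply inv_unique
    · -- (e*f) * (f*x*e) * (e*f) = e*f
      calc (e * f) * (f * x * e) * (e * f)
          = e * ((f * f) * x) * ((e * e) * f) := by simp only [mul_assoc]
        _ = (e * f) * x * (e * f) := by rw [he, hf]; simp only [mul_assoc]
        _ = e * f := mul_inv_mul (e * f)
    · calc (f * x * e) * (e * f) * (f * x * e)
          = f * (x * ((e * e) * ((f * f) * (x * e)))) := by simp only [mul_assoc]
        _ = f * (x * (e * f) * x) * e := by rw [he, hf]; simp only [mul_assoc]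
        _ = f * x * e := by rw [inv_mul_inv (e * f)]
  have hB : (f * x * e) * (f * x * e) = f * x * e := by
    calc (f * x * e) * (f * x * e)
        = f * (x * (e * f) * x) * e := by simp only [mul_assoc]
      _ = f * x * e := by rw [inv_mul_inv (e * f)]
  have hC : (e * f)⁻¹ * (e * f)⁻¹ = (e * f)⁻¹ := by rw [← hA]; exact hB
  have hD : e * f = (e * f)⁻¹ := by
    have h1 := idem_inv hC
    rwa [inv_inv'] at h1
  rw [hD]; exact hC

lemma idem_comm {e f : S} (he : e * e = e) (hf : f * f = f) :
    e * f = f * e := by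
  have hef := idem_mul_idem he hf
  have hfe := idem_mul_idem hf he
  have hD : f * e = (e * f)⁻¹ := by
    apply inv_unique
    · calc (e * f) * (f * e) * (e * f)
          = e * ((f * f) * ((e * e) * f)) := by simp only [mul_assoc]
        _ = (e * f) * (e * f) := by rw [he, hf]; simp only [mul_assoc]
        _ = e * f := hef
    · calc (f * e) * (e * f) * (f * e)
          = f * ((e * e) * ((f * f) * e)) := by simp only [mul_assoc]
        _ = (f * e) * (f * e) := by rw [he, hf]; simp only [mul_assoc]
        _ = f * e := hfe
  have hE : e * f = (e * f)⁻¹ := (idem_inv hef).symm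
  rw [hE, ← hD]

lemma mul_inv_rev' (a b : S) : (a * b)⁻¹ = b⁻¹ * a⁻¹ := by
  symm; apply inv_unique
  · calc (a * b) * (b⁻¹ * a⁻¹) * (a * b)
        = a * ((b * b⁻¹) * (a⁻¹ * a)) * b := by simp only [mul_assoc]
      _ = a * ((a⁻¹ * a) * (b * b⁻¹)) * b := by
          rw [idem_comm (mul_inv_idem b) (inv_mul_idem a)]
      _ = (a * a⁻¹ * a) * (b * b⁻¹ * b) := by simp only [mul_assoc]
      _ = a * b := by rw [mul_inv_mul, mul_inv_mul]
  · calc (b⁻¹ * a⁻¹) * (a * b) * (b⁻¹ * a⁻¹)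
        = b⁻¹ * ((a⁻¹ * a) * (b * b⁻¹)) * a⁻¹ := by simp only [mul_assoc]
      _ = b⁻¹ * ((b * b⁻¹) * (a⁻¹ * a)) * a⁻¹ := by
          rw [idem_comm (inv_mul_idem a) (mul_inv_idem b)]
      _ = (b⁻¹ * b * b⁻¹) * (a⁻¹ * a * a⁻¹) := by simp only [mul_assoc]
      _ = b⁻¹ * a⁻¹ := by rw [inv_mul_inv, inv_mul_inv]

lemma nle_refl (a : S) : nle a a := rfl

lemma nle_inv_eq {a b : S} (h : nle a b) : a * a⁻¹ = b * a⁻¹ := by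
  have h2 := congrArg Inv.inv h
  rwa [mul_inv_rev', mul_inv_rev', inv_inv', inv_inv'] at h2

lemma nle_antisymm {a b : S} (h1 : nle a b) (h2 : nle b a) : a = b := by
  have h1' := nle_inv_eq h1
  have h2' := nle_inv_eq h2
  have hf := inv_mul_idem a
  have hg := inv_mul_idem b
  have hab : a = b * (a⁻¹ * a) := by
    calc a = a * a⁻¹ * a := (mul_inv_mul a).symm
      _ = b * a⁻¹ * a := by rw [h1']
      _ = b * (a⁻¹ * a) := by rw [mul_assoc]
  have hba : b = a * (b⁻¹ * b) := by
    calc b = b * b⁻¹ * b := (mul_inv_mul b).symm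
      _ = a * b⁻¹ * b := by rw [h2']
      _ = a * (b⁻¹ * b) := by rw [mul_assoc]
  have hainv : a⁻¹ = (a⁻¹ * a) * b⁻¹ := by
    calc a⁻¹ = (b * (a⁻¹ * a))⁻¹ := by rw [← hab]
      _ = (a⁻¹ * a)⁻¹ * b⁻¹ := mul_inv_rev' _ _
      _ = (a⁻¹ * a) * b⁻¹ := by rw [idem_inv hf]
  have hbinv : b⁻¹ = (b⁻¹ * b) * a⁻¹ := by
    calc b⁻¹ = (a * (b⁻¹ * b))⁻¹ := by rw [← hba]
      _ = (b⁻¹ * b)⁻¹ * a⁻¹ := mul_inv_rev' _ _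
      _ = (b⁻¹ * b) * a⁻¹ := by rw [idem_inv hg]
  have hfg : a⁻¹ * a = (a⁻¹ * a) * (b⁻¹ * b) := by
    calc a⁻¹ * a = ((a⁻¹ * a) * b⁻¹) * (b * (a⁻¹ * a)) := by rw [← hainv, ← hab]
      _ = (a⁻¹ * a) * ((b⁻¹ * b) * (a⁻¹ * a)) := by simp only [mul_assoc]
      _ = (a⁻¹ * a) * ((a⁻¹ * a) * (b⁻¹ * b)) := by rw [idem_comm hg hf]
      _ = ((a⁻¹ * a) * (a⁻¹ * a)) * (b⁻¹ * b) := by simp only [mul_assoc]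
      _ = (a⁻¹ * a) * (b⁻¹ * b) := by rw [hf]
  have hgf : b⁻¹ * b = (b⁻¹ * b) * (a⁻¹ * a) := by
    calc b⁻¹ * b = ((b⁻¹ * b) * a⁻¹) * (a * (b⁻¹ * b)) := by rw [← hbinv, ← hba]
      _ = (b⁻¹ * b) * ((a⁻¹ * a) * (b⁻¹ * b)) := by simp only [mul_assoc]
      _ = (b⁻¹ * b) * ((b⁻¹ * b) * (a⁻¹ * a)) := by rw [idem_comm hf hg]
      _ = ((b⁻¹ * b) * (b⁻¹ * b)) * (a⁻¹ * a) := by simp only [mul_assoc]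
      _ = (b⁻¹ * b) * (a⁻¹ * a) := by rw [hg]
  have heq : a⁻¹ * a = b⁻¹ * b := by
    rw [hfg, idem_comm hf hg, ← hgf]
  calc a = b * (a⁻¹ * a) := hab
    _ = b * (b⁻¹ * b) := by rw [heq]
    _ = b := by rw [← mul_assoc, mul_inv_mul]

lemma nle_absorb {a b : S} (h : nle a b) : a * b⁻¹ * b = a := by
  have hstar := nle_inv_eq h
  have hwinv : (a * b⁻¹ * b)⁻¹ = b⁻¹ * (b * a⁻¹) := by
    rw [mul_inv_rev', mul_inv_rev', inv_inv']
  have hwa : (a * b⁻¹ * b) * a⁻¹ = a * a⁻¹ := by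
    calc (a * b⁻¹ * b) * a⁻¹ = (a * b⁻¹) * (b * a⁻¹) := by simp only [mul_assoc]
      _ = (a * a⁻¹) * (a * a⁻¹) := by rw [← hstar, ← h]
      _ = a * a⁻¹ := mul_inv_idem a
  have hww : (a * b⁻¹ * b) * (a * b⁻¹ * b)⁻¹ = a * a⁻¹ := by
    rw [hwinv]
    calc (a * b⁻¹ * b) * (b⁻¹ * (b * a⁻¹))
        = a * (b⁻¹ * b * b⁻¹) * (b * a⁻¹) := by simp only [mul_assoc]
      _ = (a * b⁻¹) * (b * a⁻¹) := by rw [inv_mul_inv]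
      _ = (a * a⁻¹) * (a * a⁻¹) := by rw [← hstar, ← h]
      _ = a * a⁻¹ := mul_inv_idem a
  have haw : a * (a * b⁻¹ * b)⁻¹ = a * a⁻¹ := by
    rw [hwinv]
    calc a * (b⁻¹ * (b * a⁻¹)) = (a * b⁻¹) * (b * a⁻¹) := by simp only [mul_assoc]
      _ = (a * a⁻¹) * (a * a⁻¹) := by rw [← hstar, ← h]
      _ = a * a⁻¹ := mul_inv_idem a
  have h1 : nle a (a * b⁻¹ * b) := haw.symm
  have h2 : nle (a * b⁻¹ * b) a := hww.trans hwa.symm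
  exact (nle_antisymm h1 h2).symm

lemma nle_trans {a b c : S} (h1 : nle a b) (h2 : nle b c) : nle a c := by
  show a * a⁻¹ = a * c⁻¹
  calc a * a⁻¹ = a * b⁻¹ := h1
    _ = a * (b⁻¹ * b * b⁻¹) := by rw [inv_mul_inv]
    _ = (a * b⁻¹) * (b * b⁻¹) := by simp only [mul_assoc]
    _ = (a * b⁻¹) * (b * c⁻¹) := by rw [h2]
    _ = (a * b⁻¹ * b) * c⁻¹ := by simp only [mul_assoc]
    _ = a * c⁻¹ := by rw [nle_absorb h1]

lemma nle_chain {y : ℕ → S} (hy : ∀ n, nle (y (n + 1)) (y n)) {i j : ℕ}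
    (hij : i ≤ j) : nle (y j) (y i) := by
  induction hij with
  | refl => exact nle_refl _
  | step h ih => exact nle_trans (hy _) ih

end InvSemigroup

section Main
open InvSemigroup

open Classical in
noncomputable def dstep {S : Type*} [InvSemigroupWithZero S] (e : ℕ → S) (n : ℕ) (s : S) : S :=
  if h : ∃ z : S, z ≠ 0 ∧ nle z s ∧ nle z (e n) then h.choose else s

/-- The diagonal sequence starting at `x`. -/
noncomputable def dseq {S : Type*} [InvSemigroupWithZero S] (e : ℕ → S) (x : S) : ℕ → S
  | 0 => x
  | n + 1 => dstep e n (dseq e x n)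

lemma dstep_spec {S : Type*} [InvSemigroupWithZero S] (e : ℕ → S) (n : ℕ) (s : S) :
    dstep e n s = s ∨ (dstep e n s ≠ 0 ∧ nle (dstep e n s) s ∧ nle (dstep e n s) (e n)) := by
  classical
  unfold dstep
  by_cases h : ∃ z : S, z ≠ 0 ∧ nle z s ∧ nle z (e n)
  · right
    rw [dif_pos h]
    exact h.choose_spec
  · left; rw [dif_neg h]

lemma dstep_hit {S : Type*} [InvSemigroupWithZero S] (e : ℕ → S) (n : ℕ) (s z : S)
    (hz : z ≠ 0) (h1 : nle z s) (h2 : nle z (e n)) :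
    dstep e n s ≠ 0 ∧ nle (dstep e n s) (e n) := by
  classical
  have h : ∃ z : S, z ≠ 0 ∧ nle z s ∧ nle z (e n) := ⟨z, hz, h1, h2⟩
  unfold dstep
  rw [dif_pos h]
  exact ⟨h.choose_spec.1, h.choose_spec.2.2⟩

theorem stmt16_aux {S : Type*} [InvSemigroupWithZero S] [Countable S]
    (x : S) (hx : x ≠ 0) :
    ∃ c : ℕ → S, (∀ n, c n ≠ 0) ∧ (∀ n, nle (c (n + 1)) (c n)) ∧
      nle (c 0) x ∧
      ∀ y : ℕ → S, (∀ n, y n ≠ 0) → (∀ n, nle (y (n + 1)) (y n)) →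
        (∀ n, ∃ m, nle (y m) (c n)) → (∀ n, ∃ m, nle (c m) (y n)) := by
  have : Nonempty S := ⟨x⟩
  obtain ⟨e, he⟩ := exists_surjective_nat S
  refine ⟨dseq e x, ?_, ?_, nle_refl x, ?_⟩
  · intro n
    induction n with
    | zero => exact hx
    | succ n ih =>
      rcases dstep_spec e n (dseq e x n) with h | h
      · show dstep e n (dseq e x n) ≠ 0
        rw [h]; exact ih
      · exact h.1
  · intro n
    rcases dstep_spec e n (dseq e x n) with h | h
    · show nle (dstep e n (dseq e x n)) (dseq e x n)
      rw [h]; exact nle_refl _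
    · exact h.2.1
  · intro y hy0 hydec hdom n
    obtain ⟨k, hk⟩ := he (y n)
    obtain ⟨m, hm⟩ := hdom k
    have hym : nle (y (max m n)) (dseq e x k) :=
      nle_trans (nle_chain hydec (le_max_left m n)) hm
    have hyn : nle (y (max m n)) (e k) := by
      rw [hk]; exact nle_chain hydec (le_max_right m n)
    have hhit := dstep_hit e k (dseq e x k) (y (max m n)) (hy0 _) hym hyn
    exact ⟨k + 1, hk ▸ hhit.2⟩



/-- In a countable inverse semigroup with zero, every nonzero element lies
above a minimal class of decreasing sequences of nonzero elements. -/
theorem stmt16 {S : Type*} [InvSemigroupWithZero S] [Countable S]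
    (x : S) (hx : x ≠ 0) :
    ∃ c : ℕ → S, (∀ n, c n ≠ 0) ∧ (∀ n, nle (c (n + 1)) (c n)) ∧
      nle (c 0) x ∧
      ∀ y : ℕ → S, (∀ n, y n ≠ 0) → (∀ n, nle (y (n + 1)) (y n)) →
        (∀ n, ∃ m, nle (y m) (c n)) → (∀ n, ∃ m, nle (c m) (y n)) := by
  exact stmt16_aux x hx

end Main
end
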